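/- Let Γ be a nonamenable finitely generated group. Then there exists a positive balanced weight function w : Γ → ℝ such that the left action of Γ on itself admits a w-Følner sequence: namely, taking disjoint balls B_r(x_r) and defining w on B_r(x_r) so that each sphere S_i(x_r), 0 ≤ i ≤ r, gets equal total weight 1/(r+1) distributed uniformly on the sphere (normalized so the outermost sphere has pointwise value matching the ambient value 1), the balls B_r(x_r) form a w-Følner sequence. -/
import Mathlib


/-- The (left) Cayley graph of `Γ` with respect to `S`. -/
def cayleyGraph (Γ : Type*) [Group Γ] (S : Finset Γ) : SimpleGraph Γ :=
  SimpleGraph.fromRel (fun x y => ∃ s ∈ S, y = s * x)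

/-- Amenability of a finitely generated group, via existence of a Følner
sequence. -/
def IsAmenableFG (Γ : Type*) [Group Γ] [DecidableEq Γ] : Prop :=
  ∃ F : ℕ → Finset Γ, (∀ n, (F n).Nonempty) ∧
    ∀ ε : ℝ, 0 < ε → ∀ L : Finset Γ, ∃ N : ℕ, ∀ n ≥ N, ∀ g ∈ L,
      (((F n).image (fun x => g * x) ∪ F n).card : ℝ) < (1 + ε) * (F n).card

/-- A `w`-Følner sequence for the left translation action of `Γ` on itself. -/
def IsWFolner (Γ : Type*) [Group Γ] [DecidableEq Γ]
    (w : Γ → ℝ) (F : ℕ → Finset Γ) : Prop :=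
  (∀ n, (F n).Nonempty) ∧
  ∀ ε : ℝ, 0 < ε → ∀ L : Finset Γ, ∃ N : ℕ, ∀ n ≥ N, ∀ g ∈ L,
    ∑ x ∈ (F n).image (fun x => g * x) ∪ F n, w x < (1 + ε) * ∑ x ∈ F n, w x

open Finset Pointwise SimpleGraph
set_option linter.unusedSectionVars false

namespace NWF
variable {Γ : Type*} [Group Γ] [DecidableEq Γ] (S : Finset Γ)

def AS : Finset Γ := insert 1 S

variable {S}

lemma one_mem_AS : (1:Γ) ∈ AS S := mem_insert_self 1 S

lemma adj_of (hSsym : ∀ s ∈ S, s⁻¹ ∈ S) {u v : Γ} (h : (cayleyGraph Γ S).Adj u v) :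
    ∃ s ∈ S, v = s * u := by
  rw [cayleyGraph, SimpleGraph.fromRel_adj] at h
  obtain ⟨hne, h | h⟩ := h
  · exact h
  · obtain ⟨s, hs, rfl⟩ := h
    exact ⟨s⁻¹, hSsym s hs, by group⟩

lemma adj_iff (hSsym : ∀ s ∈ S, s⁻¹ ∈ S) {u v : Γ} :
    (cayleyGraph Γ S).Adj u v ↔ u ≠ v ∧ ∃ s ∈ S, v = s * u := by
  constructor
  · intro h; exact ⟨h.ne, adj_of hSsym h⟩
  · rintro ⟨hne, h⟩
    rw [cayleyGraph, SimpleGraph.fromRel_adj]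
    exact ⟨hne, Or.inl h⟩


lemma adj_mul_right {u v : Γ} (c : Γ) (h : (cayleyGraph Γ S).Adj u v) :
    (cayleyGraph Γ S).Adj (u * c) (v * c) := by
  rw [cayleyGraph, SimpleGraph.fromRel_adj] at h ⊢
  obtain ⟨hne, h⟩ := h
  refine ⟨by simpa using hne, ?_⟩
  rcases h with ⟨s, hs, rfl⟩ | ⟨s, hs, rfl⟩
  · exact Or.inl ⟨s, hs, by group⟩
  · exact Or.inr ⟨s, hs, by group⟩

/-- right multiplication as a graph hom -/
def rmul (S : Finset Γ) (c : Γ) : cayleyGraph Γ S →g cayleyGraph Γ S :=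
  ⟨fun a => a * c, fun h => adj_mul_right c h⟩

lemma reachable_mul_right {u v : Γ} (c : Γ) (h : (cayleyGraph Γ S).Reachable u v) :
    (cayleyGraph Γ S).Reachable (u * c) (v * c) :=
  h.map (rmul S c)

lemma preconnected (hSsym : ∀ s ∈ S, s⁻¹ ∈ S) (hSgen : Subgroup.closure (S : Set Γ) = ⊤) :
    (cayleyGraph Γ S).Preconnected := by
  have key : ∀ g : Γ, (cayleyGraph Γ S).Reachable 1 g := by
    have hsub : ∀ g ∈ Subgroup.closure (S : Set Γ), (cayleyGraph Γ S).Reachable 1 g := by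
      intro g hg
      induction hg using Subgroup.closure_induction with
      | mem s hs =>
        by_cases h1 : (1 : Γ) = s
        · exact h1 ▸ Reachable.refl 1
        · exact SimpleGraph.Adj.reachable ((adj_iff hSsym).2 ⟨h1, ⟨s, hs, (mul_one s).symm⟩⟩)
      | one => exact Reachable.refl 1
      | mul a b _ _ ha hb =>
        exact hb.trans (by simpa using reachable_mul_right b ha)
      | inv a _ ha =>
        exact ((by simpa using reachable_mul_right a⁻¹ ha :
          (cayleyGraph Γ S).Reachable a⁻¹ 1)).symm
    intro g
    exact hsub g (by rw [hSgen]; trivial)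
  intro u v
  have := reachable_mul_right u (key (v * u⁻¹))
  simpa using this

lemma connected (hSsym : ∀ s ∈ S, s⁻¹ ∈ S) (hSgen : Subgroup.closure (S : Set Γ) = ⊤) :
    (cayleyGraph Γ S).Connected := by
  have : Nonempty Γ := ⟨1⟩
  exact SimpleGraph.Connected.mk (preconnected hSsym hSgen)

lemma exists_word_of_walk {u v : Γ} (hSsym : ∀ s ∈ S, s⁻¹ ∈ S)
    (p : (cayleyGraph Γ S).Walk u v) :
    ∃ g ∈ (AS S) ^ p.length, v = g * u := by
  induction p with
  | nil => exact ⟨1, by simp, (one_mul _).symm⟩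
  | cons h q ih =>
    obtain ⟨g, hg, rfl⟩ := ih
    obtain ⟨s, hs, rfl⟩ := adj_of hSsym h
    refine ⟨g * s, ?_, by group⟩
    rw [Walk.length_cons, pow_succ]
    exact mul_mem_mul hg (mem_insert_of_mem hs)

lemma exists_word_of_dist (hSsym : ∀ s ∈ S, s⁻¹ ∈ S)
    (hconn : (cayleyGraph Γ S).Connected) (c z : Γ) :
    ∃ g ∈ (AS S) ^ ((cayleyGraph Γ S).dist c z), z = g * c := by
  obtain ⟨p, hp⟩ := hconn.exists_walk_length_eq_dist c z
  obtain ⟨g, hg, rfl⟩ := exists_word_of_walk hSsym p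
  exact ⟨g, hp ▸ hg, rfl⟩

lemma dist_le_one_of_AS (hSsym : ∀ s ∈ S, s⁻¹ ∈ S) {s : Γ} (hs : s ∈ AS S) (z : Γ) :
    (cayleyGraph Γ S).dist z (s * z) ≤ 1 := by
  rcases mem_insert.1 hs with rfl | hs
  · simp [SimpleGraph.dist_self]
  · by_cases h : s * z = z
    · rw [h]; simp [SimpleGraph.dist_self]
    · have : (cayleyGraph Γ S).Adj z (s * z) := (adj_iff hSsym).2 ⟨Ne.symm h, s, hs, rfl⟩
      exact le_of_eq (dist_eq_one_iff_adj.2 this)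

lemma dist_le_of_word (hSsym : ∀ s ∈ S, s⁻¹ ∈ S) (hconn : (cayleyGraph Γ S).Connected)
    {k : ℕ} : ∀ g ∈ (AS S) ^ k, ∀ z : Γ, (cayleyGraph Γ S).dist z (g * z) ≤ k := by
  induction k with
  | zero => intro g hg z; rw [pow_zero, Finset.mem_one] at hg; simp [hg]
  | succ k ih =>
    intro g hg z
    rw [pow_succ'] at hg
    obtain ⟨s, hs, h, hh, rfl⟩ := Finset.mem_mul.1 hg
    rw [mul_assoc]
    calc (cayleyGraph Γ S).dist z (s * (h * z))
        ≤ (cayleyGraph Γ S).dist z (h * z) + (cayleyGraph Γ S).dist (h * z) (s * (h * z)) :=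
          hconn.dist_triangle
      _ ≤ k + 1 := by
          have h1 := ih h hh z
          have h2 := dist_le_one_of_AS hSsym hs (h * z)
          omega

lemma exists_adj_pred (hconn : (cayleyGraph Γ S).Connected) {c z : Γ} {d : ℕ}
    (h : (cayleyGraph Γ S).dist c z = d + 1) :
    ∃ p, (cayleyGraph Γ S).Adj p z ∧ (cayleyGraph Γ S).dist c p = d := by
  obtain ⟨w, hw⟩ := hconn.exists_walk_length_eq_dist c z
  have hw' : w.reverse.length = d + 1 := by rw [Walk.length_reverse, hw, h]
  generalize hq : w.reverse = q at hw'
  cases q with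
  | nil => simp at hw'
  | @cons _ b _ ha q =>
    refine ⟨b, ha.symm, ?_⟩
    have h1 : (cayleyGraph Γ S).dist c b ≤ d := by
      have := SimpleGraph.dist_le q.reverse
      rw [Walk.length_reverse] at this
      rw [Walk.length_cons] at hw'
      omega
    have h2 : (cayleyGraph Γ S).dist c z ≤ (cayleyGraph Γ S).dist c b + 1 := by
      have hbz : (cayleyGraph Γ S).dist b z ≤ 1 :=
        le_of_eq (dist_eq_one_iff_adj.2 ha.symm)
      have := hconn.dist_triangle (u := c) (v := b) (w := z)
      omega
    omega

lemma exists_prefix (hconn : (cayleyGraph Γ S).Connected) {c z : Γ} {j : ℕ}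
    (hj : j ≤ (cayleyGraph Γ S).dist c z) :
    ∃ p, (cayleyGraph Γ S).dist c p = j ∧
      (cayleyGraph Γ S).dist p z = (cayleyGraph Γ S).dist c z - j := by
  obtain ⟨d, hd⟩ : ∃ d, (cayleyGraph Γ S).dist c z = d := ⟨_, rfl⟩
  induction d generalizing z with
  | zero =>
    refine ⟨z, by omega, ?_⟩
    have h0 : (cayleyGraph Γ S).dist z z = 0 := SimpleGraph.dist_self
    omega
  | succ d ih =>
    rcases eq_or_lt_of_le hj with rfl | hlt
    · exact ⟨z, rfl, by simp⟩
    · obtain ⟨b, hadj, hb⟩ := exists_adj_pred hconn hd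
      obtain ⟨p, hp1, hp2⟩ := ih (z := b) (by omega) hb
      refine ⟨p, hp1, ?_⟩
      have h1 : (cayleyGraph Γ S).dist p z ≤ (d - j) + 1 := by
        have hbz : (cayleyGraph Γ S).dist b z ≤ 1 := le_of_eq (dist_eq_one_iff_adj.2 hadj)
        have := hconn.dist_triangle (u := p) (v := b) (w := z)
        omega
      have h2 : (cayleyGraph Γ S).dist c z ≤ (cayleyGraph Γ S).dist c p +
        (cayleyGraph Γ S).dist p z := hconn.dist_triangle
      omega

end NWF

namespace NWF2
open NWF
variable {Γ : Type*} [Group Γ] [DecidableEq Γ] (S : Finset Γ)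

/-- sphere of radius `i` around `c` as a Finset -/
noncomputable def sphF (c : Γ) (i : ℕ) : Finset Γ :=
  ((AS S) ^ i * {c}).filter (fun z => (cayleyGraph Γ S).dist c z = i)

/-- ball of radius `k` around `c` as a Finset -/
noncomputable def ballF (c : Γ) (k : ℕ) : Finset Γ :=
  ((AS S) ^ k * {c}).filter (fun z => (cayleyGraph Γ S).dist c z ≤ k)

variable {S}
variable (hSsym : ∀ s ∈ S, s⁻¹ ∈ S) (hconn : (cayleyGraph Γ S).Connected)
include hSsym hconn

lemma mem_sphF {c z : Γ} {i : ℕ} : z ∈ sphF S c i ↔ (cayleyGraph Γ S).dist c z = i := by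
  constructor
  · exact fun h => (Finset.mem_filter.1 h).2
  · intro h
    obtain ⟨g, hg, rfl⟩ := exists_word_of_dist hSsym hconn c z
    rw [h] at hg
    exact Finset.mem_filter.2 ⟨Finset.mul_mem_mul hg (Finset.mem_singleton_self c), h⟩

lemma mem_ballF {c z : Γ} {k : ℕ} : z ∈ ballF S c k ↔ (cayleyGraph Γ S).dist c z ≤ k := by
  constructor
  · exact fun h => (Finset.mem_filter.1 h).2
  · intro h
    obtain ⟨g, hg, rfl⟩ := exists_word_of_dist hSsym hconn c z
    have : g ∈ (AS S) ^ k := pow_subset_pow_right one_mem_AS h hg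
    exact Finset.mem_filter.2 ⟨Finset.mul_mem_mul this (Finset.mem_singleton_self c), h⟩

lemma mem_annulus {c z : Γ} {j k : ℕ} (h1 : j ≤ (cayleyGraph Γ S).dist c z)
    (h2 : (cayleyGraph Γ S).dist c z ≤ j + k) :
    z ∈ (AS S) ^ k * sphF S c j := by
  obtain ⟨p, hp1, hp2⟩ := exists_prefix hconn h1
  obtain ⟨g, hg, rfl⟩ := exists_word_of_dist hSsym hconn p z
  have : g ∈ (AS S) ^ k := pow_subset_pow_right one_mem_AS (by omega) hg
  exact Finset.mul_mem_mul this ((mem_sphF hSsym hconn).2 hp1)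

lemma card_sph_succ_le (c : Γ) (i : ℕ) :
    (sphF S c (i + 1)).card ≤ (AS S).card * (sphF S c i).card := by
  have hsub : sphF S c (i + 1) ⊆ (AS S) ^ 1 * sphF S c i := by
    intro z hz
    have hz' := (mem_sphF hSsym hconn).1 hz
    exact mem_annulus hSsym hconn (by omega) (by omega)
  calc (sphF S c (i+1)).card ≤ ((AS S) ^ 1 * sphF S c i).card := Finset.card_le_card hsub
    _ ≤ ((AS S) ^ 1).card * (sphF S c i).card := Finset.card_mul_le
    _ = (AS S).card * (sphF S c i).card := by rw [pow_one]

lemma sph_nonempty [Infinite Γ] (c : Γ) (i : ℕ) : (sphF S c i).Nonempty := by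
  obtain ⟨z, hz⟩ := Finset.exists_notMem ((AS S) ^ i * {c})
  have hd : i ≤ (cayleyGraph Γ S).dist c z := by
    by_contra h
    push_neg at h
    obtain ⟨g, hg, rfl⟩ := exists_word_of_dist hSsym hconn c z
    exact hz (Finset.mul_mem_mul (pow_subset_pow_right one_mem_AS (by omega) hg)
      (Finset.mem_singleton_self c))
  obtain ⟨p, hp1, _⟩ := exists_prefix hconn hd
  exact ⟨p, (mem_sphF hSsym hconn).2 hp1⟩

lemma ballF_eq_biUnion (c : Γ) (k : ℕ) :
    ballF S c k = (Finset.range (k + 1)).biUnion (fun i => sphF S c i) := by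
  ext z
  simp only [mem_ballF hSsym hconn, Finset.mem_biUnion, Finset.mem_range,
    mem_sphF hSsym hconn]
  constructor
  · intro h; exact ⟨_, by omega, rfl⟩
  · rintro ⟨i, hi, rfl⟩; omega

lemma sphF_subset_ballF (c : Γ) {i k : ℕ} (h : i ≤ k) : sphF S c i ⊆ ballF S c k := by
  intro z hz
  exact (mem_ballF hSsym hconn).2 (by have := (mem_sphF hSsym hconn).1 hz; omega)

end NWF2

namespace NWF3
open NWF NWF2
variable {Γ : Type*} [Group Γ] [DecidableEq Γ] {S : Finset Γ}

lemma infinite_of_nonamenable (h : ¬ IsAmenableFG Γ) : Infinite Γ := by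
  by_contra hinf
  have hfin : Finite Γ := not_infinite_iff_finite.mp hinf
  have : Fintype Γ := Fintype.ofFinite Γ
  apply h
  refine ⟨fun _ => Finset.univ, fun _ => ⟨1, Finset.mem_univ 1⟩, ?_⟩
  intro ε hε L
  refine ⟨0, fun n _ g _ => ?_⟩
  have h1 : ((Finset.univ : Finset Γ).image (fun x => g * x) ∪ Finset.univ) = Finset.univ :=
    Finset.union_eq_right.2 (Finset.subset_univ _)
  rw [h1]
  have h2 : (0:ℝ) < (Finset.univ : Finset Γ).card := by
    have : (0:ℕ) < (Finset.univ : Finset Γ).card := Finset.card_pos.2 ⟨1, Finset.mem_univ 1⟩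
    exact_mod_cast this
  nlinarith

lemma AS_inv (hSsym : ∀ s ∈ S, s⁻¹ ∈ S) : (AS S)⁻¹ = AS S := by
  ext a
  rw [Finset.mem_inv']
  unfold AS
  simp only [Finset.mem_insert]
  constructor
  · rintro (h | h)
    · left; rw [← inv_inv a, h]; simp
    · right; have := hSsym _ h; simpa using this
  · rintro (rfl | h)
    · left; simp
    · right; exact hSsym _ h

lemma exists_pow_mem (hSsym : ∀ s ∈ S, s⁻¹ ∈ S)
    (hSgen : Subgroup.closure (S : Set Γ) = ⊤) (g : Γ) : ∃ m, g ∈ (AS S) ^ m := by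
  have hsub : ∀ g ∈ Subgroup.closure (S : Set Γ), ∃ m, g ∈ (AS S) ^ m := by
    intro g hg
    induction hg using Subgroup.closure_induction with
    | mem s hs => exact ⟨1, by rw [pow_one]; exact Finset.mem_insert_of_mem hs⟩
    | one => exact ⟨0, by simp⟩
    | mul a b _ _ ha hb =>
      obtain ⟨m, hm⟩ := ha; obtain ⟨m', hm'⟩ := hb
      exact ⟨m + m', by rw [pow_add]; exact Finset.mul_mem_mul hm hm'⟩
    | inv a _ ha =>
      obtain ⟨m, hm⟩ := ha
      refine ⟨m, ?_⟩
      rw [← AS_inv hSsym, inv_pow, Finset.mem_inv']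
      simpa using hm
  exact hsub g (by rw [hSgen]; trivial)

lemma exists_L_subset (hSsym : ∀ s ∈ S, s⁻¹ ∈ S)
    (hSgen : Subgroup.closure (S : Set Γ) = ⊤) (L : Finset Γ) :
    ∃ m, 1 ≤ m ∧ ∀ g ∈ L, g ∈ (AS S) ^ m := by
  choose f hf using exists_pow_mem hSsym hSgen (Γ := Γ)
  refine ⟨1 + L.sup f, by omega, fun g hg => ?_⟩
  exact pow_subset_pow_right one_mem_AS (le_trans (Finset.le_sup hg) (by omega)) (hf g)

lemma exists_iso (hSsym : ∀ s ∈ S, s⁻¹ ∈ S)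
    (hSgen : Subgroup.closure (S : Set Γ) = ⊤) (h : ¬ IsAmenableFG Γ) :
    ∃ ε₀ : ℝ, 0 < ε₀ ∧ ∃ m₀ : ℕ, 1 ≤ m₀ ∧ ∀ F : Finset Γ, F.Nonempty →
      ∃ g ∈ (AS S) ^ m₀,
        (1 + ε₀) * F.card ≤ ((F.image (fun x => g * x) ∪ F).card : ℝ) := by
  by_contra hc
  push_neg at hc
  apply h
  have hc' : ∀ n : ℕ, ∃ F : Finset Γ, F.Nonempty ∧ ∀ g ∈ (AS S) ^ (n + 1),
      ((F.image (fun x => g * x) ∪ F).card : ℝ) < (1 + (1 / (n + 1))) * F.card := by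
    intro n
    obtain ⟨F, hF, hF2⟩ := hc (1 / (n + 1)) (by positivity) (n + 1) (by omega)
    exact ⟨F, hF, hF2⟩
  choose F hFne hFspec using hc'
  refine ⟨F, hFne, ?_⟩
  intro ε hε L
  obtain ⟨m, hm1, hmL⟩ := exists_L_subset hSsym hSgen L
  refine ⟨max m ⌈ε⁻¹⌉₊, fun n hn g hg => ?_⟩
  have hgm : g ∈ (AS S) ^ (n + 1) :=
    pow_subset_pow_right one_mem_AS (by omega : m ≤ n + 1) (hmL g hg)
  have h1 := hFspec n g hgm
  have h2 : (1 : ℝ) / (n + 1) < ε := by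
    have hc1 : ε⁻¹ ≤ (⌈ε⁻¹⌉₊ : ℝ) := Nat.le_ceil _
    have hc2 : (⌈ε⁻¹⌉₊ : ℝ) ≤ n := by exact_mod_cast le_trans (le_max_right m _) hn
    have : ε⁻¹ < (n : ℝ) + 1 := by linarith
    rw [div_lt_iff₀ (by positivity)]
    calc (1:ℝ) = ε * ε⁻¹ := by field_simp
      _ < ε * ((n:ℝ)+1) := by exact mul_lt_mul_of_pos_left this hε
  have hcard : (0:ℝ) < (F n).card := by
    have := Finset.card_pos.2 (hFne n); exact_mod_cast this
  calc ((F n).image (fun x => g * x) ∪ F n).card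
      < (1 + (1 / (n + 1) : ℝ)) * (F n).card := h1
    _ < (1 + ε) * (F n).card := by nlinarith

end NWF3

namespace NWF4
open NWF NWF2 NWF3
variable {Γ : Type*} [Group Γ] [DecidableEq Γ] {S : Finset Γ}
variable (hSsym : ∀ s ∈ S, s⁻¹ ∈ S) (hconn : (cayleyGraph Γ S).Connected)
include hSsym hconn

/-- the key lower bound on sphere growth from nonamenability -/
lemma sph_lower {ε₀ : ℝ} (hε : 0 < ε₀) {m₀ : ℕ} (hm : 1 ≤ m₀)
    (hiso : ∀ F : Finset Γ, F.Nonempty → ∃ g ∈ (AS S) ^ m₀,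
      (1 + ε₀) * F.card ≤ ((F.image (fun x => g * x) ∪ F).card : ℝ))
    (c : Γ) (i : ℕ) :
    ((sphF S c i).card : ℝ) ≤
      ((((AS S) ^ (m₀ - 1)).card : ℝ) / ε₀) * (sphF S c (i + 1)).card := by
  set F := ballF S c i with hF
  have hFne : F.Nonempty := ⟨c, (mem_ballF hSsym hconn).2 (by simp [SimpleGraph.dist_self])⟩
  obtain ⟨g, hg, hcard⟩ := hiso F hFne
  set E := F.image (fun x => g * x) ∪ F with hE
  -- extra part is inside the annulus
  have hsub : E \ F ⊆ (AS S) ^ (m₀ - 1) * sphF S c (i + 1) := by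
    intro z hz
    obtain ⟨hz1, hz2⟩ := Finset.mem_sdiff.1 hz
    have hz3 : z ∈ F.image (fun x => g * x) := by
      rcases Finset.mem_union.1 hz1 with h | h
      · exact h
      · exact absurd h hz2
    obtain ⟨y, hy, rfl⟩ := Finset.mem_image.1 hz3
    have hyd : (cayleyGraph Γ S).dist c y ≤ i := (mem_ballF hSsym hconn).1 hy
    have hgyd : (cayleyGraph Γ S).dist y (g * y) ≤ m₀ := dist_le_of_word hSsym hconn g hg y
    have htri : (cayleyGraph Γ S).dist c (g * y) ≤ (cayleyGraph Γ S).dist c y +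
      (cayleyGraph Γ S).dist y (g * y) := hconn.dist_triangle
    have hout : ¬ ((cayleyGraph Γ S).dist c (g * y) ≤ i) :=
      fun hcon => hz2 ((mem_ballF hSsym hconn).2 hcon)
    exact mem_annulus hSsym hconn (by omega) (by omega)
  have hEcard : (E.card : ℝ) = F.card + (E \ F).card := by
    have hsplit : F ∪ E \ F = E := by
      rw [Finset.union_sdiff_self_eq_union]
      exact Finset.union_eq_right.2 Finset.subset_union_right
    have h1 : E.card = F.card + (E \ F).card := by
      conv_lhs => rw [← hsplit]
      rw [Finset.card_union_of_disjoint Finset.disjoint_sdiff]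
    rw [h1]; push_cast; ring
  have h2 : ((E \ F).card : ℝ) ≤ (((AS S) ^ (m₀ - 1)).card : ℝ) * (sphF S c (i + 1)).card := by
    calc ((E \ F).card : ℝ) ≤ (((AS S) ^ (m₀ - 1) * sphF S c (i + 1)).card : ℝ) := by
          exact_mod_cast Finset.card_le_card hsub
      _ ≤ _ := by exact_mod_cast Finset.card_mul_le
  have h3 : ((sphF S c i).card : ℝ) ≤ F.card :=
    by exact_mod_cast Finset.card_le_card (sphF_subset_ballF hSsym hconn c (le_refl i))
  have h4 : ε₀ * F.card ≤ ((E \ F).card : ℝ) := by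
    rw [hEcard] at hcard; nlinarith
  rw [div_mul_eq_mul_div, le_div_iff₀ hε]
  nlinarith

/-- telescoped lower bound -/
lemma sph_ratio_pow {c : Γ} {K : ℝ} (hK1 : 1 ≤ K)
    (hK : ∀ i : ℕ, ((sphF S c i).card : ℝ) ≤ K * (sphF S c (i + 1)).card) :
    ∀ n i : ℕ, ((sphF S c i).card : ℝ) ≤ K ^ n * (sphF S c (i + n)).card := by
  intro n
  induction n with
  | zero => intro i; simp
  | succ n ih =>
    intro i
    calc ((sphF S c i).card : ℝ) ≤ K ^ n * (sphF S c (i + n)).card := ih i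
      _ ≤ K ^ n * (K * (sphF S c (i + n + 1)).card) := by
          have := hK (i + n)
          have hKn : (0:ℝ) ≤ K ^ n := by positivity
          nlinarith
      _ = K ^ (n + 1) * (sphF S c (i + (n + 1))).card := by ring

/-- telescoped upper bound -/
lemma sph_growth_pow (c : Γ) :
    ∀ n i : ℕ, ((sphF S c (i + n)).card : ℝ) ≤ ((AS S).card : ℝ) ^ n * (sphF S c i).card := by
  have hB1 : (1:ℝ) ≤ ((AS S).card : ℝ) := by
    have : 0 < (AS S).card := Finset.card_pos.2 ⟨1, one_mem_AS⟩
    exact_mod_cast this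
  intro n
  induction n with
  | zero => intro i; simp
  | succ n ih =>
    intro i
    have h1 : ((sphF S c (i + n + 1)).card : ℝ) ≤ ((AS S).card : ℝ) * (sphF S c (i + n)).card := by
      exact_mod_cast card_sph_succ_le hSsym hconn c (i + n)
    calc ((sphF S c (i + (n+1))).card : ℝ) = ((sphF S c (i + n + 1)).card : ℝ) := by
          rw [show i + (n+1) = i + n + 1 by omega]
      _ ≤ ((AS S).card : ℝ) * (sphF S c (i + n)).card := h1
      _ ≤ ((AS S).card : ℝ) * (((AS S).card : ℝ) ^ n * (sphF S c i).card) := by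
          have := ih i
          have : (0:ℝ) ≤ ((AS S).card : ℝ) := by positivity
          nlinarith [ih i]
      _ = ((AS S).card : ℝ) ^ (n+1) * (sphF S c i).card := by ring

end NWF4

set_option maxHeartbeats 1000000 in
/-- For a nonamenable finitely generated group `Γ`, given disjoint balls
`B_r(x_r)` in the Cayley graph, the weight giving each sphere `S_i(x_r)` equal
total weight (uniformly distributed, normalized so the outermost sphere has
pointwise value `1`, and extended by `1` off the balls) is positive and
balanced, and the balls form a `w`-Følner sequence. -/
theorem nonamenable_weighted_folner
    {Γ : Type*} [Group Γ] [DecidableEq Γ]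
    (S : Finset Γ) (hSsym : ∀ s ∈ S, s⁻¹ ∈ S)
    (hSgen : Subgroup.closure (S : Set Γ) = ⊤)
    (hnonamen : ¬ IsAmenableFG Γ)
    (x : ℕ → Γ)
    (hdisj : ∀ r s : ℕ, 1 ≤ r → 1 ≤ s → r ≠ s →
      Disjoint {y : Γ | (cayleyGraph Γ S).dist (x r) y ≤ r}
        {y : Γ | (cayleyGraph Γ S).dist (x s) y ≤ s})
    (hfin : ∀ r : ℕ, {y : Γ | (cayleyGraph Γ S).dist (x r) y ≤ r}.Finite) :
    ∃ w : Γ → ℝ,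
      (∀ y, 0 < w y) ∧
      (∃ C : ℝ, 1 < C ∧ ∀ u v : Γ, (cayleyGraph Γ S).Adj u v →
        1 / C < w v / w u ∧ w v / w u < C) ∧
      (∀ r : ℕ, 1 ≤ r → ∀ y : Γ, (cayleyGraph Γ S).dist (x r) y ≤ r →
        w y = ({z : Γ | (cayleyGraph Γ S).dist (x r) z = r}.ncard : ℝ) /
          ({z : Γ | (cayleyGraph Γ S).dist (x r) z = (cayleyGraph Γ S).dist (x r) y}.ncard : ℝ)) ∧
      (∀ y : Γ, (∀ r : ℕ, 1 ≤ r → ¬ (cayleyGraph Γ S).dist (x r) y ≤ r) → w y = 1) ∧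
      IsWFolner Γ w (fun n => (hfin (n + 1)).toFinset) := by
  classical
  have hconn : (cayleyGraph Γ S).Connected := NWF.connected hSsym hSgen
  haveI : Infinite Γ := NWF3.infinite_of_nonamenable hnonamen
  obtain ⟨ε₀, hε, m₀, hm₀, hiso⟩ := NWF3.exists_iso hSsym hSgen hnonamen
  -- sphere cardinalities are positive
  have hpos : ∀ (c : Γ) (i : ℕ), (0:ℝ) < ((NWF2.sphF S c i).card : ℝ) := fun c i => by
    exact_mod_cast Finset.card_pos.2 (NWF2.sph_nonempty hSsym hconn c i)
  -- growth constants
  set B : ℝ := ((NWF.AS S).card : ℝ) with hBdef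
  have hB1 : (1:ℝ) ≤ B := by
    have h1 : 1 ≤ (NWF.AS S).card := Finset.card_pos.2 ⟨1, NWF.one_mem_AS⟩
    rw [hBdef]; exact_mod_cast h1
  set K : ℝ := max 1 (((((NWF.AS S) ^ (m₀-1)).card : ℝ)) / ε₀) with hKdef
  have hK1 : (1:ℝ) ≤ K := le_max_left _ _
  have hKbound : ∀ (c : Γ) (i : ℕ),
      ((NWF2.sphF S c i).card : ℝ) ≤ K * ((NWF2.sphF S c (i+1)).card : ℝ) := by
    intro c i
    refine le_trans (NWF4.sph_lower hSsym hconn hε hm₀ hiso c i) ?_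
    exact mul_le_mul_of_nonneg_right (le_max_right _ _) (by positivity)
  have hBbound : ∀ (c : Γ) (n i : ℕ),
      ((NWF2.sphF S c (i + n)).card : ℝ) ≤ B ^ n * ((NWF2.sphF S c i).card : ℝ) :=
    fun c => NWF4.sph_growth_pow hSsym hconn c
  -- uniqueness of the ball containing a point
  have huniq : ∀ y : Γ, ∀ r s : ℕ, 1 ≤ r → 1 ≤ s →
      (cayleyGraph Γ S).dist (x r) y ≤ r → (cayleyGraph Γ S).dist (x s) y ≤ s → r = s := by
    intro y r s hr hs h1 h2
    by_contra hne
    exact Set.disjoint_left.1 (hdisj r s hr hs hne) h1 h2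
  -- the weight
  set w : Γ → ℝ := fun y =>
    if h : ∃ r : ℕ, 1 ≤ r ∧ (cayleyGraph Γ S).dist (x r) y ≤ r then
      ((NWF2.sphF S (x h.choose) h.choose).card : ℝ) /
        ((NWF2.sphF S (x h.choose) ((cayleyGraph Γ S).dist (x h.choose) y)).card : ℝ)
    else 1 with hwdef
  have hwball : ∀ r : ℕ, 1 ≤ r → ∀ y : Γ, (cayleyGraph Γ S).dist (x r) y ≤ r →
      w y = ((NWF2.sphF S (x r) r).card : ℝ) /
        ((NWF2.sphF S (x r) ((cayleyGraph Γ S).dist (x r) y)).card : ℝ) := by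
    intro r hr y hy
    have hex : ∃ r : ℕ, 1 ≤ r ∧ (cayleyGraph Γ S).dist (x r) y ≤ r := ⟨r, hr, hy⟩
    have heq : hex.choose = r :=
      huniq y hex.choose r hex.choose_spec.1 hr hex.choose_spec.2 hy
    rw [hwdef]
    simp only [dif_pos hex, heq]
  have hwout : ∀ y : Γ,
      (∀ r : ℕ, 1 ≤ r → ¬ (cayleyGraph Γ S).dist (x r) y ≤ r) → w y = 1 := by
    intro y hy
    rw [hwdef]
    have : ¬ ∃ r : ℕ, 1 ≤ r ∧ (cayleyGraph Γ S).dist (x r) y ≤ r := by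
      rintro ⟨r, hr, h⟩; exact hy r hr h
    simp only [dif_neg this]
  have hwpos : ∀ y, 0 < w y := by
    intro y
    by_cases h : ∃ r : ℕ, 1 ≤ r ∧ (cayleyGraph Γ S).dist (x r) y ≤ r
    · obtain ⟨r, hr, hy⟩ := h
      rw [hwball r hr y hy]
      exact div_pos (hpos _ _) (hpos _ _)
    · rw [hwout y (fun r hr hle => h ⟨r, hr, hle⟩)]; norm_num
  -- boundary lemma: an adjacent point entering a ball from outside lands on value 1
  have hbdry : ∀ s : ℕ, 1 ≤ s → ∀ u v : Γ, (cayleyGraph Γ S).Adj u v →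
      ¬ ((cayleyGraph Γ S).dist (x s) u ≤ s) → (cayleyGraph Γ S).dist (x s) v ≤ s →
      w v = 1 := by
    intro s hs u v hadj hu hv
    have hd1 : (cayleyGraph Γ S).dist v u = 1 := dist_eq_one_iff_adj.2 hadj.symm
    have htri : (cayleyGraph Γ S).dist (x s) u ≤ (cayleyGraph Γ S).dist (x s) v +
        (cayleyGraph Γ S).dist v u := hconn.dist_triangle
    have hdv : (cayleyGraph Γ S).dist (x s) v = s := by omega
    rw [hwball s hs v hv, hdv]
    exact div_self (ne_of_gt (hpos _ _))
  -- one-sided balance bound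
  set D : ℝ := max K B with hDdef
  have hD1 : (1:ℝ) ≤ D := le_trans hK1 (le_max_left _ _)
  have hbhalf : ∀ u v : Γ, (cayleyGraph Γ S).Adj u v → w v ≤ D * w u := by
    intro u v hadj
    have hd1 : (cayleyGraph Γ S).dist u v = 1 := dist_eq_one_iff_adj.2 hadj
    by_cases hu : ∃ r : ℕ, 1 ≤ r ∧ (cayleyGraph Γ S).dist (x r) u ≤ r
    · obtain ⟨r, hr, hur⟩ := hu
      by_cases hv : (cayleyGraph Γ S).dist (x r) v ≤ r
      · -- both in ball r
        rw [hwball r hr u hur, hwball r hr v hv]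
        obtain ⟨i, hi⟩ : ∃ i, (cayleyGraph Γ S).dist (x r) u = i := ⟨_, rfl⟩
        obtain ⟨j, hj⟩ : ∃ j, (cayleyGraph Γ S).dist (x r) v = j := ⟨_, rfl⟩
        rw [hi, hj]
        have ht1 : j ≤ i + 1 := by
          have := hconn.dist_triangle (u := x r) (v := u) (w := v); omega
        have ht2 : i ≤ j + 1 := by
          have hd2 : (cayleyGraph Γ S).dist v u = 1 := dist_eq_one_iff_adj.2 hadj.symm
          have := hconn.dist_triangle (u := x r) (v := v) (w := u); omega
        have hbc : ((NWF2.sphF S (x r) i).card : ℝ) ≤ D * ((NWF2.sphF S (x r) j).card : ℝ) := by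
          have hcase : i = j ∨ i = j + 1 ∨ j = i + 1 := by omega
          rcases hcase with hc | hc | hc
          · rw [hc]
            have : K ≤ D := le_max_left _ _
            nlinarith [hpos (x r) j]
          · rw [hc]
            have h1 : ((NWF2.sphF S (x r) (j+1)).card : ℝ) ≤ B * ((NWF2.sphF S (x r) j).card : ℝ) := by
              have := hBbound (x r) 1 j
              simpa [pow_one] using this
            have : B ≤ D := le_max_right _ _
            nlinarith [hpos (x r) j]
          · have h1 := hKbound (x r) i
            rw [← hc] at h1
            have : K ≤ D := le_max_left _ _
            nlinarith [hpos (x r) j]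
        rw [mul_div_assoc']
        rw [div_le_div_iff₀ (hpos _ _) (hpos _ _)]
        nlinarith [hpos (x r) r, hpos (x r) i, hpos (x r) j]
      · -- u on the boundary sphere, v outside ball r
        have htri : (cayleyGraph Γ S).dist (x r) v ≤ (cayleyGraph Γ S).dist (x r) u +
            (cayleyGraph Γ S).dist u v := hconn.dist_triangle
        have hur' : (cayleyGraph Γ S).dist (x r) u = r := by omega
        have hwu : w u = 1 := by
          rw [hwball r hr u hur, hur']
          exact div_self (ne_of_gt (hpos _ _))
        have hwv : w v = 1 := by
          by_cases hv2 : ∃ s : ℕ, 1 ≤ s ∧ (cayleyGraph Γ S).dist (x s) v ≤ s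
          · obtain ⟨s, hs, hvs⟩ := hv2
            have hus : ¬ ((cayleyGraph Γ S).dist (x s) u ≤ s) := by
              intro hcon
              exact hv (huniq u r s hr hs hur hcon ▸ hvs)
            exact hbdry s hs u v hadj hus hvs
          · exact hwout v (fun s hs hle => hv2 ⟨s, hs, hle⟩)
        rw [hwu, hwv]; linarith
    · -- u outside all balls
      have hwu : w u = 1 := hwout u (fun s hs hle => hu ⟨s, hs, hle⟩)
      have hwv : w v = 1 := by
        by_cases hv2 : ∃ s : ℕ, 1 ≤ s ∧ (cayleyGraph Γ S).dist (x s) v ≤ s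
        · obtain ⟨s, hs, hvs⟩ := hv2
          have hus : ¬ ((cayleyGraph Γ S).dist (x s) u ≤ s) :=
            fun hcon => hu ⟨s, hs, hcon⟩
          exact hbdry s hs u v hadj hus hvs
        · exact hwout v (fun s hs hle => hv2 ⟨s, hs, hle⟩)
      rw [hwu, hwv]; linarith
  -- set ncard vs Finset card of spheres
  have hncard : ∀ (r i : ℕ),
      ({z : Γ | (cayleyGraph Γ S).dist (x r) z = i}.ncard : ℝ)
        = ((NWF2.sphF S (x r) i).card : ℝ) := by
    intro r i
    have hset : {z : Γ | (cayleyGraph Γ S).dist (x r) z = i} = ↑(NWF2.sphF S (x r) i) := by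
      ext z
      simp [NWF2.mem_sphF hSsym hconn]
    rw [hset, Set.ncard_coe_finset]
  have hFeq : ∀ r : ℕ, (hfin r).toFinset = NWF2.ballF S (x r) r := by
    intro r; ext z
    rw [Set.Finite.mem_toFinset, NWF2.mem_ballF hSsym hconn]
    exact Iff.rfl
  -- total weight of a ball
  have hsum : ∀ r : ℕ, 1 ≤ r → ∑ z ∈ NWF2.ballF S (x r) r, w z
      = ((r:ℝ)+1) * ((NWF2.sphF S (x r) r).card : ℝ) := by
    intro r hr
    rw [NWF2.ballF_eq_biUnion hSsym hconn]
    rw [Finset.sum_biUnion (fun a _ b _ hab => Finset.disjoint_left.2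
      (fun z hz1 hz2 => hab (((NWF2.mem_sphF hSsym hconn).1 hz1).symm.trans
        ((NWF2.mem_sphF hSsym hconn).1 hz2))))]
    have hinner : ∀ i ∈ Finset.range (r+1),
        ∑ z ∈ NWF2.sphF S (x r) i, w z = ((NWF2.sphF S (x r) r).card : ℝ) := by
      intro i hi
      rw [Finset.mem_range] at hi
      have hval : ∀ z ∈ NWF2.sphF S (x r) i, w z =
          ((NWF2.sphF S (x r) r).card : ℝ) / ((NWF2.sphF S (x r) i).card : ℝ) := by
        intro z hz
        have hz' := (NWF2.mem_sphF hSsym hconn).1 hz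
        rw [hwball r hr z (by omega), hz']
      rw [Finset.sum_congr rfl hval, Finset.sum_const, nsmul_eq_mul]
      have hne : ((NWF2.sphF S (x r) i).card : ℝ) ≠ 0 := ne_of_gt (hpos _ _)
      field_simp
    rw [Finset.sum_congr rfl hinner, Finset.sum_const, Finset.card_range, nsmul_eq_mul]
    push_cast; ring
  refine ⟨w, hwpos, ⟨D + 1, by linarith, ?_⟩, ?_, hwout, ?_, ?_⟩
  · -- balance
    intro u v hadj
    have h1 := hbhalf u v hadj
    have h2 := hbhalf v u hadj.symm
    have hu0 := hwpos u
    have hv0 := hwpos v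
    have hD0 : (0:ℝ) < D := by linarith
    constructor
    · rw [div_lt_div_iff₀ (by linarith) hu0]
      nlinarith
    · rw [div_lt_iff₀ hu0]
      nlinarith
  · -- the value on the balls
    intro r hr y hy
    rw [hwball r hr y hy, hncard, hncard]
  · -- nonemptiness of the Følner sets
    intro n
    refine ⟨x (n+1), ?_⟩
    rw [Set.Finite.mem_toFinset]
    show (cayleyGraph Γ S).dist (x (n+1)) (x (n+1)) ≤ n+1
    simp [SimpleGraph.dist_self]
  · -- the Følner property
    intro ε hε L
    obtain ⟨m, hm1, hmL⟩ := NWF3.exists_L_subset hSsym hSgen L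
    set bm : ℝ := (((NWF.AS S)^m).card : ℝ) with hbmdef
    have hbm0 : (0:ℝ) ≤ bm := by positivity
    set Wb : ℝ := B ^ m with hWdef
    have hW1 : (1:ℝ) ≤ Wb := one_le_pow₀ hB1
    refine ⟨Nat.ceil ((bm * Wb)/ε), fun n hn g hg => ?_⟩
    dsimp only
    rw [hFeq (n+1)]
    have hr : 1 ≤ n + 1 := by omega
    set r := n + 1 with hrdef
    set F := NWF2.ballF S (x r) r with hFdef
    set E := F.image (fun z => g * z) ∪ F with hEdef
    have hkey : ∀ z ∈ E \ F, r < (cayleyGraph Γ S).dist (x r) z ∧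
        (cayleyGraph Γ S).dist (x r) z ≤ r + m := by
      intro z hz
      obtain ⟨hz1, hz2⟩ := Finset.mem_sdiff.1 hz
      have hz3 : z ∈ F.image (fun z => g * z) := by
        rcases Finset.mem_union.1 hz1 with h | h
        · exact h
        · exact absurd h hz2
      obtain ⟨y, hy, rfl⟩ := Finset.mem_image.1 hz3
      have hyd : (cayleyGraph Γ S).dist (x r) y ≤ r := (NWF2.mem_ballF hSsym hconn).1 hy
      have hgyd : (cayleyGraph Γ S).dist y (g * y) ≤ m :=
        NWF.dist_le_of_word hSsym hconn g (hmL g hg) y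
      have htri : (cayleyGraph Γ S).dist (x r) (g * y) ≤ (cayleyGraph Γ S).dist (x r) y +
          (cayleyGraph Γ S).dist y (g * y) := hconn.dist_triangle
      have hout : ¬ ((cayleyGraph Γ S).dist (x r) (g * y) ≤ r) :=
        fun hcon => hz2 ((NWF2.mem_ballF hSsym hconn).2 hcon)
      omega
    have hEsub : E \ F ⊆ (NWF.AS S)^m * NWF2.sphF S (x r) r := by
      intro z hz
      obtain ⟨hd1, hd2⟩ := hkey z hz
      exact NWF2.mem_annulus hSsym hconn (by omega) (by omega)
    have hwann : ∀ z ∈ E \ F, w z ≤ Wb := by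
      intro z hz
      obtain ⟨hd1, hd2⟩ := hkey z hz
      by_cases hzball : ∃ s : ℕ, 1 ≤ s ∧ (cayleyGraph Γ S).dist (x s) z ≤ s
      · obtain ⟨s, hs, hzs⟩ := hzball
        have hsr : s ≠ r := by
          intro h
          rw [h] at hzs
          omega
        obtain ⟨q, hq1, hq2⟩ := NWF.exists_prefix hconn (le_of_lt hd1)
        have hqs : ¬ ((cayleyGraph Γ S).dist (x s) q ≤ s) := by
          intro hcon
          exact hsr (huniq q s r hs hr hcon (le_of_eq hq1))
        have htri2 : (cayleyGraph Γ S).dist (x s) q ≤ (cayleyGraph Γ S).dist (x s) z +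
            (cayleyGraph Γ S).dist z q := hconn.dist_triangle
        have hzq : (cayleyGraph Γ S).dist z q = (cayleyGraph Γ S).dist q z :=
          SimpleGraph.dist_comm
        obtain ⟨j, hjq⟩ : ∃ j, (cayleyGraph Γ S).dist (x s) z = j := ⟨_, rfl⟩
        have hjs : j ≤ s := hjq ▸ hzs
        have hsj : s - j ≤ m := by omega
        have hgrow := hBbound (x s) (s - j) j
        rw [show j + (s - j) = s by omega] at hgrow
        have hBpow : B^(s-j) ≤ B^m := pow_le_pow_right₀ hB1 hsj
        rw [hwball s hs z hzs, hjq]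
        rw [div_le_iff₀ (hpos _ _)]
        have hjpos := hpos (x s) j
        have hBp0 : (0:ℝ) ≤ B^(s-j) := by positivity
        nlinarith
      · rw [hwout z (fun s hs hle => hzball ⟨s, hs, hle⟩)]
        exact hW1
    have hcard1 : (((E \ F).card : ℕ) : ℝ) ≤ bm * ((NWF2.sphF S (x r) r).card : ℝ) := by
      have h1 : (E \ F).card ≤ ((NWF.AS S)^m).card * (NWF2.sphF S (x r) r).card :=
        le_trans (Finset.card_le_card hEsub) Finset.card_mul_le
      rw [hbmdef]
      exact_mod_cast h1
    have hsplit : F ∪ E \ F = E := by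
      rw [Finset.union_sdiff_self_eq_union]
      exact Finset.union_eq_right.2 Finset.subset_union_right
    have hsumE : ∑ z ∈ E, w z = ∑ z ∈ F, w z + ∑ z ∈ E \ F, w z := by
      conv_lhs => rw [← hsplit]
      rw [Finset.sum_union Finset.disjoint_sdiff]
    have hsum2 : ∑ z ∈ E \ F, w z ≤ (((E \ F).card : ℕ) : ℝ) * Wb := by
      calc ∑ z ∈ E \ F, w z ≤ (E \ F).card • Wb := Finset.sum_le_card_nsmul _ _ _ hwann
        _ = _ := nsmul_eq_mul _ _
    have hS := hpos (x r) r
    have hsumF := hsum r hr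
    rw [← hFdef] at hsumF
    have hbw : bm * Wb ≤ ε * n := by
      have hceil : (bm * Wb)/ε ≤ (Nat.ceil ((bm*Wb)/ε) : ℝ) := Nat.le_ceil _
      have hrN : ((Nat.ceil ((bm*Wb)/ε) : ℕ) : ℝ) ≤ (n : ℝ) := by exact_mod_cast hn
      have : (bm * Wb)/ε ≤ (n : ℝ) := le_trans hceil hrN
      calc bm * Wb = ((bm * Wb)/ε) * ε := by field_simp
        _ ≤ (n : ℝ) * ε := mul_le_mul_of_nonneg_right this (le_of_lt hε)
        _ = ε * n := by ring
    have hrcast : ((r:ℝ)) = (n:ℝ) + 1 := by rw [hrdef]; push_cast; ring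
    have hwsum : ∑ z ∈ E \ F, w z ≤ bm * ((NWF2.sphF S (x r) r).card : ℝ) * Wb := by
      calc ∑ z ∈ E \ F, w z ≤ (((E \ F).card : ℕ) : ℝ) * Wb := hsum2
        _ ≤ bm * ((NWF2.sphF S (x r) r).card : ℝ) * Wb :=
            mul_le_mul_of_nonneg_right hcard1 (by linarith)
    rw [hsumE, hsumF]
    nlinarith [mul_le_mul_of_nonneg_right hbw (le_of_lt hS), mul_pos hε hS]
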